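/- arXiv:2302.03138 — 2 statements merged into one kernel-verified Lean document; each statement's English description precedes it below -/
import Mathlib

section
/- Let T > 0 and M > 0. For every N ∈ ℕ₊ with step size τ = T/N ≤ 1, suppose Ã_k (n×n), B̃_k (n×m), Q̃_k (n×n symmetric positive semidefinite), R̃_k (m×m symmetric positive definite), k = 0,…,N−1, and G̃ (n×n symmetric positive semidefinite) satisfy ‖Ã_k‖ ≤ M, ‖Q̃_k‖ ≤ M and ‖G̃‖ ≤ M, and let Π_N = G̃, Π_k = (I + τÃ_k)ᵀΠ_{k+1}(I + τÃ_k) + τQ̃_k − τH_kᵀW_k⁻¹H_k with W_k = R̃_k + τB̃_kᵀΠ_{k+1}B̃_k, H_k = B̃_kᵀΠ_{k+1}(I + τÃ_k). Then there exists a constant C depending only on M and T (in particular independent of N, τ, B̃_k and R̃_k) such that ‖Π_l‖ ≤ C for every l = 0,…,N. -/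
open Matrix

/-- The spectral norm of a real matrix: the operator norm induced by the Euclidean norms. -/
noncomputable def sNorm {p q : ℕ} (M : Matrix (Fin p) (Fin q) ℝ) : ℝ :=
  ‖LinearMap.toContinuousLinearMap (Matrix.toEuclideanLin M)‖

private lemma dot_self_nonneg' {p : ℕ} (x : Fin p → ℝ) : 0 ≤ x ⬝ᵥ x :=
  Finset.sum_nonneg fun i _ => mul_self_nonneg _

private lemma norm_symm_sq {p : ℕ} (v : Fin p → ℝ) :
    ‖(WithLp.equiv 2 (Fin p → ℝ)).symm v‖ ^ 2 = v ⬝ᵥ v := by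
  rw [EuclideanSpace.norm_eq, Real.sq_sqrt (Finset.sum_nonneg fun i _ => sq_nonneg _)]
  simp only [WithLp.equiv_symm_apply, WithLp.ofLp_toLp, Real.norm_eq_abs, sq_abs, dotProduct]
  exact Finset.sum_congr rfl fun i _ => by ring

private lemma le_of_sq_le_sq' {a b : ℝ} (ha : 0 ≤ a) (hb : 0 ≤ b) (h : a ^ 2 ≤ b ^ 2) :
    a ≤ b := by nlinarith

private lemma mulVec_dot_le {p q : ℕ} (A : Matrix (Fin p) (Fin q) ℝ) (x : Fin q → ℝ) :
    (A *ᵥ x) ⬝ᵥ (A *ᵥ x) ≤ sNorm A ^ 2 * (x ⬝ᵥ x) := by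
  have h := (LinearMap.toContinuousLinearMap (Matrix.toEuclideanLin A)).le_opNorm
    ((WithLp.equiv 2 (Fin q → ℝ)).symm x)
  rw [LinearMap.coe_toContinuousLinearMap', WithLp.equiv_symm_apply,
    Matrix.toEuclideanLin_apply_piLp_toLp, ← WithLp.equiv_symm_apply] at h
  have h2 : ‖(WithLp.equiv 2 (Fin p → ℝ)).symm (A *ᵥ x)‖ ^ 2 ≤
      (sNorm A * ‖(WithLp.equiv 2 (Fin q → ℝ)).symm x‖) ^ 2 :=
    pow_le_pow_left₀ (norm_nonneg _) h 2
  rw [norm_symm_sq, mul_pow] at h2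
  rw [norm_symm_sq x] at h2
  exact h2

private lemma sNorm_le_of_mulVec {p q : ℕ} {A : Matrix (Fin p) (Fin q) ℝ} {c : ℝ} (hc : 0 ≤ c)
    (h : ∀ x : Fin q → ℝ, (A *ᵥ x) ⬝ᵥ (A *ᵥ x) ≤ c ^ 2 * (x ⬝ᵥ x)) : sNorm A ≤ c := by
  apply ContinuousLinearMap.opNorm_le_bound _ hc
  intro x
  have hx : x = (WithLp.equiv 2 (Fin q → ℝ)).symm (WithLp.equiv 2 (Fin q → ℝ) x) :=
    ((WithLp.equiv 2 (Fin q → ℝ)).symm_apply_apply x).symm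
  set v : Fin q → ℝ := WithLp.equiv 2 (Fin q → ℝ) x with hv
  rw [hx, LinearMap.coe_toContinuousLinearMap', WithLp.equiv_symm_apply,
    Matrix.toEuclideanLin_apply_piLp_toLp, ← WithLp.equiv_symm_apply]
  apply le_of_sq_le_sq' (norm_nonneg _) (by positivity)
  rw [mul_pow, norm_symm_sq, ← WithLp.equiv_symm_apply, norm_symm_sq]
  exact h v

private lemma sNorm_nonneg' {p q : ℕ} (A : Matrix (Fin p) (Fin q) ℝ) : 0 ≤ sNorm A :=
  norm_nonneg _

private lemma sNorm_add_le {p q : ℕ} (A B : Matrix (Fin p) (Fin q) ℝ) :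
    sNorm (A + B) ≤ sNorm A + sNorm B := by
  unfold sNorm
  rw [map_add, map_add]
  exact norm_add_le _ _

private lemma sNorm_smul' {p q : ℕ} (c : ℝ) (A : Matrix (Fin p) (Fin q) ℝ) :
    sNorm (c • A) ≤ |c| * sNorm A := by
  unfold sNorm
  rw [_root_.map_smul, _root_.map_smul]
  simpa [Real.norm_eq_abs] using
    ContinuousLinearMap.opNorm_smul_le c (LinearMap.toContinuousLinearMap (toEuclideanLin A))

private lemma sNorm_one_le {p : ℕ} : sNorm (1 : Matrix (Fin p) (Fin p) ℝ) ≤ 1 := by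
  apply sNorm_le_of_mulVec zero_le_one
  intro x
  rw [one_mulVec, one_pow, one_mul]

private lemma dot_symm {p : ℕ} {X : Matrix (Fin p) (Fin p) ℝ} (hX : Xᵀ = X)
    (u w : Fin p → ℝ) : u ⬝ᵥ (X *ᵥ w) = w ⬝ᵥ (X *ᵥ u) := by
  rw [dotProduct_mulVec]
  conv_lhs => rw [← hX]
  rw [vecMul_transpose, dotProduct_comm]

private lemma dot_cs {p : ℕ} {X : Matrix (Fin p) (Fin p) ℝ} (hX : Xᵀ = X)
    (hpsd : ∀ v, 0 ≤ v ⬝ᵥ (X *ᵥ v)) (x y : Fin p → ℝ) :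
    (x ⬝ᵥ (X *ᵥ y)) ^ 2 ≤ (x ⬝ᵥ (X *ᵥ x)) * (y ⬝ᵥ (X *ᵥ y)) := by
  have key : discrim (y ⬝ᵥ (X *ᵥ y)) (2 * (x ⬝ᵥ (X *ᵥ y))) (x ⬝ᵥ (X *ᵥ x)) ≤ 0 := by
    apply discrim_le_zero
    intro t
    have h0 := hpsd (x + t • y)
    have hexp : (x + t • y) ⬝ᵥ (X *ᵥ (x + t • y)) =
        (y ⬝ᵥ (X *ᵥ y)) * (t * t) + 2 * (x ⬝ᵥ (X *ᵥ y)) * t + x ⬝ᵥ (X *ᵥ x) := by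
      rw [mulVec_add, mulVec_smul, add_dotProduct, smul_dotProduct, dotProduct_add,
        dotProduct_add, dotProduct_smul, dotProduct_smul, smul_eq_mul, smul_eq_mul, smul_eq_mul,
        dot_symm hX y x]
      ring
    rw [hexp] at h0
    exact h0
  rw [discrim] at key
  nlinarith [key]

private lemma dot_mulVec_le {p : ℕ} (Z : Matrix (Fin p) (Fin p) ℝ) (x : Fin p → ℝ) :
    x ⬝ᵥ (Z *ᵥ x) ≤ sNorm Z * (x ⬝ᵥ x) := by
  have cs : (x ⬝ᵥ (Z *ᵥ x)) ^ 2 ≤ (x ⬝ᵥ x) * ((Z *ᵥ x) ⬝ᵥ (Z *ᵥ x)) := by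
    have h1 := dot_cs (X := (1 : Matrix (Fin p) (Fin p) ℝ)) Matrix.transpose_one
      (fun v => by rw [one_mulVec]; exact dot_self_nonneg' v) x (Z *ᵥ x)
    simpa [one_mulVec] using h1
  have h2 := mulVec_dot_le Z x
  have h3 : (x ⬝ᵥ (Z *ᵥ x)) ^ 2 ≤ (sNorm Z * (x ⬝ᵥ x)) ^ 2 := by
    nlinarith [dot_self_nonneg' x, sNorm_nonneg' Z]
  nlinarith [h3, mul_nonneg (sNorm_nonneg' Z) (dot_self_nonneg' x)]

private lemma sNorm_le_of_quad {p : ℕ} {X : Matrix (Fin p) (Fin p) ℝ} (hX : Xᵀ = X)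
    (hpsd : ∀ v, 0 ≤ v ⬝ᵥ (X *ᵥ v)) {c : ℝ} (hc : 0 ≤ c)
    (h : ∀ x, x ⬝ᵥ (X *ᵥ x) ≤ c * (x ⬝ᵥ x)) : sNorm X ≤ c := by
  apply sNorm_le_of_mulVec hc
  intro x
  set u := X *ᵥ x with hu
  have h1 : u ⬝ᵥ u = x ⬝ᵥ (X *ᵥ u) := by
    rw [dot_symm hX x u, hu]
  have h2 := dot_cs hX hpsd x u
  have h3 := h x
  have h4 := h u
  rcases eq_or_lt_of_le (dot_self_nonneg' u) with h0 | h0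
  · rw [← h0]; exact mul_nonneg (sq_nonneg c) (dot_self_nonneg' x)
  · have h5 : (u ⬝ᵥ u) * (u ⬝ᵥ u) ≤ (c ^ 2 * (x ⬝ᵥ x)) * (u ⬝ᵥ u) := by
      nlinarith [hpsd u, hpsd x, mul_nonneg hc (dot_self_nonneg' x)]
    exact le_of_mul_le_mul_right h5 h0
private lemma dot_conj {a b : ℕ} (A : Matrix (Fin a) (Fin b) ℝ) (X : Matrix (Fin a) (Fin a) ℝ)
    (x : Fin b → ℝ) : x ⬝ᵥ ((Aᵀ * X * A) *ᵥ x) = (A *ᵥ x) ⬝ᵥ (X *ᵥ (A *ᵥ x)) := by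
  rw [← mulVec_mulVec, ← mulVec_mulVec, dotProduct_mulVec x Aᵀ, vecMul_transpose]

private lemma dot_shift {n m : ℕ} {S : Matrix (Fin n) (Fin n) ℝ} (hSt : Sᵀ = S)
    (B : Matrix (Fin n) (Fin m) ℝ) (z : Fin n → ℝ) (y : Fin m → ℝ) :
    z ⬝ᵥ (S *ᵥ (B *ᵥ y)) = (Bᵀ *ᵥ (S *ᵥ z)) ⬝ᵥ y := by
  rw [dot_symm hSt, dotProduct_comm, dotProduct_mulVec, ← mulVec_transpose]

private lemma psd_quad {p : ℕ} {X : Matrix (Fin p) (Fin p) ℝ} (hX : X.PosSemidef)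
    (x : Fin p → ℝ) : 0 ≤ x ⬝ᵥ (X *ᵥ x) := by
  simpa using hX.dotProduct_mulVec_nonneg x

private lemma herm_transpose {p : ℕ} {X : Matrix (Fin p) (Fin p) ℝ} (hX : X.IsHermitian) :
    Xᵀ = X := by
  rw [← Matrix.conjTranspose_eq_transpose_of_trivial]
  exact hX

private lemma step {n m : ℕ} {τ s M' : ℝ} (hτ : 0 < τ) (hM : 0 ≤ M') (hs : 0 ≤ s)
    {A Q S : Matrix (Fin n) (Fin n) ℝ} {B : Matrix (Fin n) (Fin m) ℝ}
    {R : Matrix (Fin m) (Fin m) ℝ}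
    (hS : S.PosSemidef) (hQ : Q.PosSemidef) (hR : R.PosDef)
    (hA : sNorm A ≤ M') (hQn : sNorm Q ≤ M') (hSn : sNorm S ≤ s)
    (P : Matrix (Fin n) (Fin n) ℝ)
    (hP : P = (1 + τ • A)ᵀ * S * (1 + τ • A) + τ • Q
      - τ • ((Bᵀ * S * (1 + τ • A))ᵀ * (R + τ • (Bᵀ * S * B))⁻¹ * (Bᵀ * S * (1 + τ • A)))) :
    P.PosSemidef ∧ sNorm P ≤ (1 + τ * M') ^ 2 * s + τ * M' := by
  have hSt : Sᵀ = S := herm_transpose hS.1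
  have hQt : Qᵀ = Q := herm_transpose hQ.1
  have hRt : Rᵀ = R := herm_transpose hR.1
  subst hP
  set F := 1 + τ • A with hFdef
  set W := R + τ • (Bᵀ * S * B) with hWdef
  set H := Bᵀ * S * F with hHdef
  -- W is positive definite
  have hBSB : (Bᵀ * S * B).PosSemidef := by
    have := hS.conjTranspose_mul_mul_same B
    rwa [Matrix.conjTranspose_eq_transpose_of_trivial] at this
  have hτBSB : (τ • (Bᵀ * S * B)).PosSemidef := by
    refine Matrix.PosSemidef.of_dotProduct_mulVec_nonneg ?_ fun x => ?_
    · show (τ • (Bᵀ * S * B))ᴴ = _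
      rw [Matrix.conjTranspose_smul, Matrix.conjTranspose_eq_transpose_of_trivial,
        herm_transpose hBSB.1, star_trivial]
    · rw [smul_mulVec, dotProduct_smul, smul_eq_mul]
      exact mul_nonneg hτ.le (by simpa using hBSB.dotProduct_mulVec_nonneg x)
  have hW : W.PosDef := hR.add_posSemidef hτBSB
  have hWt : Wᵀ = W := herm_transpose hW.1
  have hWinv : W⁻¹.PosDef := hW.inv
  have hWinvt : (W⁻¹)ᵀ = W⁻¹ := herm_transpose hWinv.1
  have hWWinv : W * W⁻¹ = 1 :=
    Matrix.mul_nonsing_inv W (isUnit_iff_ne_zero.mpr hW.det_pos.ne')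
  -- quadratic form decomposition
  have hquad : ∀ x : Fin n → ℝ,
      x ⬝ᵥ ((Fᵀ * S * F + τ • Q - τ • (Hᵀ * W⁻¹ * H)) *ᵥ x) =
        (F *ᵥ x) ⬝ᵥ (S *ᵥ (F *ᵥ x)) + τ * (x ⬝ᵥ (Q *ᵥ x))
          - τ * ((H *ᵥ x) ⬝ᵥ (W⁻¹ *ᵥ (H *ᵥ x))) := by
    intro x
    rw [sub_mulVec, add_mulVec, smul_mulVec, smul_mulVec, dotProduct_sub,
      dotProduct_add, dotProduct_smul, dotProduct_smul, smul_eq_mul, smul_eq_mul,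
      dot_conj F S x, dot_conj H W⁻¹ x]
  -- lower bound: positive semidefinite
  have hlow : ∀ x : Fin n → ℝ,
      0 ≤ x ⬝ᵥ ((Fᵀ * S * F + τ • Q - τ • (Hᵀ * W⁻¹ * H)) *ᵥ x) := by
    intro x
    rw [hquad x]
    set z := F *ᵥ x with hz
    set v := H *ᵥ x with hv
    have hvz : v = Bᵀ *ᵥ (S *ᵥ z) := by
      rw [hv, hz, hHdef, ← mulVec_mulVec, ← mulVec_mulVec]
    set y := W⁻¹ *ᵥ v with hy
    set b := B *ᵥ y with hb
    have hWy : W *ᵥ y = v := by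
      rw [hy, mulVec_mulVec, hWWinv, one_mulVec]
    have hδ : v ⬝ᵥ y = y ⬝ᵥ (R *ᵥ y) + τ * (b ⬝ᵥ (S *ᵥ b)) := by
      calc v ⬝ᵥ y = (W *ᵥ y) ⬝ᵥ y := by rw [hWy]
        _ = y ⬝ᵥ (W *ᵥ y) := dotProduct_comm _ _
        _ = y ⬝ᵥ (R *ᵥ y) + τ * (y ⬝ᵥ ((Bᵀ * S * B) *ᵥ y)) := by
            rw [hWdef, add_mulVec, smul_mulVec, dotProduct_add, dotProduct_smul,
              smul_eq_mul]
        _ = y ⬝ᵥ (R *ᵥ y) + τ * (b ⬝ᵥ (S *ᵥ b)) := by rw [dot_conj B S y, ← hb]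
    have hzb : z ⬝ᵥ (S *ᵥ b) = v ⬝ᵥ y := by
      rw [hb, dot_shift hSt B z y, ← hvz]
    have hbz : b ⬝ᵥ (S *ᵥ z) = v ⬝ᵥ y := by
      rw [dot_symm hSt b z, hzb]
    have hfinal : (z - τ • b) ⬝ᵥ (S *ᵥ (z - τ • b)) =
        z ⬝ᵥ (S *ᵥ z) - 2 * τ * (v ⬝ᵥ y) + τ ^ 2 * (b ⬝ᵥ (S *ᵥ b)) := by
      rw [mulVec_sub, mulVec_smul, sub_dotProduct, dotProduct_sub, dotProduct_sub,
        dotProduct_smul, smul_dotProduct, smul_dotProduct, dotProduct_smul,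
        hzb, hbz]
      simp only [smul_eq_mul]
      ring
    have h5 : 0 ≤ (z - τ • b) ⬝ᵥ (S *ᵥ (z - τ • b)) := psd_quad hS _
    have hρ : 0 ≤ y ⬝ᵥ (R *ᵥ y) := psd_quad hR.posSemidef y
    have hQx : 0 ≤ x ⬝ᵥ (Q *ᵥ x) := psd_quad hQ x
    have hδτ : τ * (v ⬝ᵥ y) = τ * (y ⬝ᵥ (R *ᵥ y)) + τ * (τ * (b ⬝ᵥ (S *ᵥ b))) := by
      rw [hδ]; ring
    have hρτ : 0 ≤ τ * (y ⬝ᵥ (R *ᵥ y)) := mul_nonneg hτ.le hρ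
    have hQτ : 0 ≤ τ * (x ⬝ᵥ (Q *ᵥ x)) := mul_nonneg hτ.le hQx
    nlinarith [h5, hfinal, hδτ, hρτ, hQτ]
  -- transpose symmetry
  have htrans : (Fᵀ * S * F + τ • Q - τ • (Hᵀ * W⁻¹ * H))ᵀ =
      Fᵀ * S * F + τ • Q - τ • (Hᵀ * W⁻¹ * H) := by
    simp only [Matrix.transpose_sub, Matrix.transpose_add, Matrix.transpose_smul,
      Matrix.transpose_mul, Matrix.transpose_transpose, hSt, hQt, hWinvt, Matrix.mul_assoc]
  -- upper bound on quadratic form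
  have hFn : sNorm F ≤ 1 + τ * M' := by
    calc sNorm F ≤ sNorm (1 : Matrix (Fin n) (Fin n) ℝ) + sNorm (τ • A) :=
          sNorm_add_le _ _
      _ ≤ 1 + τ * M' := by
          refine add_le_add sNorm_one_le ((sNorm_smul' τ A).trans ?_)
          rw [abs_of_nonneg hτ.le]
          exact mul_le_mul_of_nonneg_left hA hτ.le
  have hF2 : sNorm F ^ 2 ≤ (1 + τ * M') ^ 2 := pow_le_pow_left₀ (sNorm_nonneg' F) hFn 2
  have hup : ∀ x : Fin n → ℝ,
      x ⬝ᵥ ((Fᵀ * S * F + τ • Q - τ • (Hᵀ * W⁻¹ * H)) *ᵥ x) ≤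
        ((1 + τ * M') ^ 2 * s + τ * M') * (x ⬝ᵥ x) := by
    intro x
    rw [hquad x]
    have h1 : (F *ᵥ x) ⬝ᵥ (S *ᵥ (F *ᵥ x)) ≤ s * ((1 + τ * M') ^ 2 * (x ⬝ᵥ x)) := by
      calc (F *ᵥ x) ⬝ᵥ (S *ᵥ (F *ᵥ x)) ≤ sNorm S * ((F *ᵥ x) ⬝ᵥ (F *ᵥ x)) :=
            dot_mulVec_le S _
        _ ≤ s * ((F *ᵥ x) ⬝ᵥ (F *ᵥ x)) :=
            mul_le_mul_of_nonneg_right hSn (dot_self_nonneg' _)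
        _ ≤ s * (sNorm F ^ 2 * (x ⬝ᵥ x)) :=
            mul_le_mul_of_nonneg_left (mulVec_dot_le F x) hs
        _ ≤ s * ((1 + τ * M') ^ 2 * (x ⬝ᵥ x)) :=
            mul_le_mul_of_nonneg_left
              (mul_le_mul_of_nonneg_right hF2 (dot_self_nonneg' x)) hs
    have h2 : τ * (x ⬝ᵥ (Q *ᵥ x)) ≤ τ * (M' * (x ⬝ᵥ x)) :=
      mul_le_mul_of_nonneg_left
        ((dot_mulVec_le Q x).trans (mul_le_mul_of_nonneg_right hQn (dot_self_nonneg' x))) hτ.le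
    have h3 : 0 ≤ τ * ((H *ᵥ x) ⬝ᵥ (W⁻¹ *ᵥ (H *ᵥ x))) :=
      mul_nonneg hτ.le (psd_quad hWinv.posSemidef _)
    nlinarith [h1, h2, h3]
  refine ⟨Matrix.PosSemidef.of_dotProduct_mulVec_nonneg ?_ fun x => by simpa using hlow x, ?_⟩
  · show _ᴴ = _
    rw [Matrix.conjTranspose_eq_transpose_of_trivial, htrans]
  · exact sNorm_le_of_quad htrans hlow (by positivity) hup
theorem stmt7 (T M : ℝ) (hT : 0 < T) (hM : 0 < M) :
    ∃ C : ℝ, ∀ (n m N : ℕ), 0 < N → T / (N : ℝ) ≤ 1 →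
      ∀ (At : ℕ → Matrix (Fin n) (Fin n) ℝ) (Bt : ℕ → Matrix (Fin n) (Fin m) ℝ)
        (Qt : ℕ → Matrix (Fin n) (Fin n) ℝ) (Rt : ℕ → Matrix (Fin m) (Fin m) ℝ)
        (Gt : Matrix (Fin n) (Fin n) ℝ) (Pi : ℕ → Matrix (Fin n) (Fin n) ℝ),
      (∀ k < N, (Qt k).PosSemidef) → (∀ k < N, (Rt k).PosDef) → Gt.PosSemidef →
      (∀ k < N, sNorm (At k) ≤ M) → (∀ k < N, sNorm (Qt k) ≤ M) → sNorm Gt ≤ M →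
      Pi N = Gt →
      (∀ k < N, Pi k =
        (1 + (T / (N : ℝ)) • At k)ᵀ * Pi (k + 1) * (1 + (T / (N : ℝ)) • At k)
          + (T / (N : ℝ)) • Qt k
          - (T / (N : ℝ)) • (((Bt k)ᵀ * Pi (k + 1) * (1 + (T / (N : ℝ)) • At k))ᵀ
              * (Rt k + (T / (N : ℝ)) • ((Bt k)ᵀ * Pi (k + 1) * Bt k))⁻¹
              * ((Bt k)ᵀ * Pi (k + 1) * (1 + (T / (N : ℝ)) • At k)))) →
      ∀ l ≤ N, sNorm (Pi l) ≤ C := by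
  refine ⟨Real.exp (2 * M * T) * (M + M * T), ?_⟩
  intro n m N hN hτ1 At Bt Qt Rt Gt Pi hQ hR hG hAn hQn hGn hPiN hrec l hl
  set τ := T / (N : ℝ) with hτdef
  have hNpos : (0 : ℝ) < N := by exact_mod_cast hN
  have hτpos : 0 < τ := div_pos hT hNpos
  have hτN : τ * N = T := div_mul_cancel₀ T hNpos.ne'
  have key : ∀ d l', N = l' + d → (Pi l').PosSemidef ∧
      sNorm (Pi l') ≤ (1 + τ * M) ^ (2 * d) * (M + M * (τ * (d : ℝ))) := by
    intro d
    induction d with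
    | zero =>
      intro l' h
      obtain rfl : l' = N := by omega
      rw [hPiN]
      refine ⟨hG, ?_⟩
      simpa using hGn
    | succ d ih =>
      intro l' hNl
      have hlN : l' < N := by omega
      obtain ⟨hpsd, hbound⟩ := ih (l' + 1) (by omega)
      have hs : 0 ≤ (1 + τ * M) ^ (2 * d) * (M + M * (τ * (d : ℝ))) := by positivity
      obtain ⟨h1, h2⟩ := step hτpos hM.le hs hpsd (hQ l' hlN) (hR l' hlN)
        (hAn l' hlN) (hQn l' hlN) hbound (Pi l') (hrec l' hlN)
      refine ⟨h1, h2.trans ?_⟩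
      have hsplit : (1 + τ * M) ^ (2 * (d + 1)) = (1 + τ * M) ^ 2 * (1 + τ * M) ^ (2 * d) := by
        rw [show 2 * (d + 1) = 2 + 2 * d by ring, pow_add]
      have hone : (1 : ℝ) ≤ (1 + τ * M) ^ (2 * (d + 1)) :=
        one_le_pow₀ (by nlinarith [mul_nonneg hτpos.le hM.le])
      push_cast
      rw [hsplit]
      have hτM : 0 ≤ τ * M := mul_nonneg hτpos.le hM.le
      have hτd : 0 ≤ τ * (d : ℝ) := mul_nonneg hτpos.le (Nat.cast_nonneg d)
      nlinarith [pow_nonneg (by nlinarith : (0:ℝ) ≤ 1 + τ * M) (2 * d),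
        mul_nonneg hM.le hτd,
        hone, hsplit]
  obtain ⟨-, hb⟩ := key (N - l) l (by omega)
  refine hb.trans ?_
  set d := N - l with hd
  have hdN : (d : ℝ) ≤ N := by exact_mod_cast Nat.sub_le N l
  have hτd : τ * (d : ℝ) ≤ T := by
    calc τ * (d : ℝ) ≤ τ * N := mul_le_mul_of_nonneg_left hdN hτpos.le
      _ = T := hτN
  have hτdnn : 0 ≤ τ * (d : ℝ) := mul_nonneg hτpos.le (Nat.cast_nonneg d)
  have e1 : 1 + τ * M ≤ Real.exp (τ * M) := by
    have := Real.add_one_le_exp (τ * M); linarith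
  have e2 : (1 + τ * M) ^ (2 * d) ≤ Real.exp (τ * M) ^ (2 * d) :=
    pow_le_pow_left₀ (by nlinarith [mul_nonneg hτpos.le hM.le]) e1 _
  have e3 : Real.exp (τ * M) ^ (2 * d) = Real.exp ((2 * d : ℕ) * (τ * M)) :=
    (Real.exp_nat_mul _ _).symm
  have e4 : ((2 * d : ℕ) : ℝ) * (τ * M) ≤ 2 * M * T := by
    push_cast
    nlinarith [hτd, hM.le, hτdnn]
  have e5 : (1 + τ * M) ^ (2 * d) ≤ Real.exp (2 * M * T) := by
    rw [e3] at e2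
    exact e2.trans (Real.exp_le_exp.mpr e4)
  have e6 : M + M * (τ * (d : ℝ)) ≤ M + M * T := by
    have := mul_le_mul_of_nonneg_left hτd hM.le
    linarith
  have epos : 0 ≤ (1 + τ * M) ^ (2 * d) := by
    have hτM : 0 ≤ τ * M := mul_nonneg hτpos.le hM.le
    positivity
  exact mul_le_mul e5 e6 (by positivity) (Real.exp_nonneg _)
end

section
/- Let T > 0 and M > 0. Let Ã, Q̃ : [0,T] → ℝ^{n×n} and R̃ : [0,T] → ℝ^{m×m} be continuous with, for every t ∈ [0,T], Q̃(t) symmetric positive semidefinite, R̃(t) symmetric positive definite, ‖Ã(t)‖ ≤ M, ‖Q̃(t)‖ ≤ M and ‖R̃(t)⁻¹‖ ≤ M; let B̃ ∈ ℝ^{n×m} with ‖B̃‖ ≤ M, and let G̃ be symmetric positive semidefinite with ‖G̃‖ ≤ M. Suppose Π : [0,T] → ℝ^{n×n} is continuously differentiable, Π(t) is symmetric positive semidefinite for every t, Π(T) = G̃, and Π′(t) + Π(t)Ã(t) + Ã(t)ᵀΠ(t) + Q̃(t) − Π(t)B̃R̃(t)⁻¹B̃ᵀΠ(t) = 0 for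 all t ∈ [0,T]. Then there exists a constant C depending only on M and T such that sup_{t∈[0,T]} ‖Π(t)‖ ≤ C and ‖Π(t) − Π(s)‖ ≤ C|t − s| for all s, t ∈ [0,T]. -/
open Matrix Set
open scoped Matrix.Norms.L2Operator InnerProductSpace
attribute [local instance 2000] Matrix.instL2OpNormedAddCommGroup
attribute [-instance] Matrix.instCStarRing Matrix.instL2OpNormedAlgebra Matrix.instL2OpNormedRing

lemma norm_clm_eq {n : ℕ} (A : Matrix (Fin n) (Fin n) ℝ) :
    ‖A‖ = ‖Matrix.toEuclideanCLM (𝕜 := ℝ) A‖ := rfl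

lemma sNorm_eq {p q : ℕ} (A : Matrix (Fin p) (Fin q) ℝ) : sNorm A = ‖A‖ := rfl

namespace RicAux

variable {n : ℕ}

lemma inner_clm (S : Matrix (Fin n) (Fin n) ℝ) (x y : EuclideanSpace ℝ (Fin n)) :
    ⟪x, Matrix.toEuclideanCLM (𝕜 := ℝ) S y⟫_ℝ = ∑ i, x i * ∑ j, S i j * y j := by
  have h : ∀ i, (Matrix.toEuclideanCLM (𝕜 := ℝ) S) y i = ∑ j, S i j * y j := fun i => by
    have h2 := congrFun (Matrix.ofLp_toEuclideanCLM (n := Fin n) (𝕜 := ℝ) S y) i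
    simpa [Matrix.toLin'_apply, Matrix.mulVec, dotProduct] using h2
  simp [PiLp.inner_apply, h]
  exact Finset.sum_congr rfl fun i _ => mul_comm _ _

lemma abs_inner_clm_le (S : Matrix (Fin n) (Fin n) ℝ) (x y : EuclideanSpace ℝ (Fin n)) :
    |⟪x, Matrix.toEuclideanCLM (𝕜 := ℝ) S y⟫_ℝ| ≤ ‖S‖ * (‖x‖ * ‖y‖) := by
  calc |⟪x, Matrix.toEuclideanCLM (𝕜 := ℝ) S y⟫_ℝ|
      ≤ ‖x‖ * ‖Matrix.toEuclideanCLM (𝕜 := ℝ) S y‖ := abs_real_inner_le_norm _ _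
    _ ≤ ‖x‖ * (‖Matrix.toEuclideanCLM (𝕜 := ℝ) S‖ * ‖y‖) := by
        gcongr; exact ContinuousLinearMap.le_opNorm _ _
    _ = ‖S‖ * (‖x‖ * ‖y‖) := by rw [norm_clm_eq]; ring

lemma opnorm_le_of_inner_le (S : Matrix (Fin n) (Fin n) ℝ) {c : ℝ} (hc : 0 ≤ c)
    (h : ∀ x y : EuclideanSpace ℝ (Fin n),
      ⟪Matrix.toEuclideanCLM (𝕜 := ℝ) S x, y⟫_ℝ ≤ c * (‖x‖ * ‖y‖)) : ‖S‖ ≤ c := by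
  rw [norm_clm_eq]
  refine ContinuousLinearMap.opNorm_le_bound _ hc fun x => ?_
  set T := Matrix.toEuclideanCLM (𝕜 := ℝ) S
  rcases eq_or_lt_of_le (norm_nonneg (T x)) with h0 | h0
  · rw [← h0]; positivity
  · have h1 := h x (T x)
    rw [real_inner_self_eq_norm_mul_norm] at h1
    have : ‖T x‖ * ‖T x‖ ≤ (c * ‖x‖) * ‖T x‖ := by nlinarith
    exact le_of_mul_le_mul_right this h0

lemma psd_inner_nonneg {S : Matrix (Fin n) (Fin n) ℝ} (hS : S.PosSemidef)
    (x : EuclideanSpace ℝ (Fin n)) :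
    0 ≤ ⟪x, Matrix.toEuclideanCLM (𝕜 := ℝ) S x⟫_ℝ := by
  rw [inner_clm]
  have := hS.dotProduct_mulVec_nonneg (fun i => x i)
  simpa [dotProduct, Matrix.mulVec, Finset.mul_sum] using this

open scoped MatrixOrder in
lemma psd_norm_le {S : Matrix (Fin n) (Fin n) ℝ} (hS : S.PosSemidef) {c : ℝ} (hc : 0 ≤ c)
    (h : ∀ x : EuclideanSpace ℝ (Fin n),
      ⟪x, Matrix.toEuclideanCLM (𝕜 := ℝ) S x⟫_ℝ ≤ c * (‖x‖ * ‖x‖)) : ‖S‖ ≤ c := by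
  classical
  set s := CFC.sqrt S with hs_def
  have hs : s.PosSemidef := (CFC.sqrt_nonneg S).posSemidef
  have hmul : s * s = S := CFC.sqrt_mul_sqrt_self S hS.nonneg
  have hstar : star s = s := by
    rw [Matrix.star_eq_conjTranspose]; exact hs.1
  have hnorm_s : ‖s‖ ≤ Real.sqrt c := by
    rw [norm_clm_eq]
    refine ContinuousLinearMap.opNorm_le_bound _ (Real.sqrt_nonneg c) fun x => ?_
    set T := Matrix.toEuclideanCLM (𝕜 := ℝ) s with hT
    have e1 : ⟪T x, T x⟫_ℝ = ⟪x, Matrix.toEuclideanCLM (𝕜 := ℝ) S x⟫_ℝ := by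
      calc ⟪T x, T x⟫_ℝ = ⟪x, ContinuousLinearMap.adjoint T (T x)⟫_ℝ := by
            rw [ContinuousLinearMap.adjoint_inner_right]
        _ = ⟪x, Matrix.toEuclideanCLM (𝕜 := ℝ) S x⟫_ℝ := by
            rw [← ContinuousLinearMap.star_eq_adjoint, hT, ← map_star, hstar, ← hmul,
              _root_.map_mul, ContinuousLinearMap.mul_apply]
    have key : ‖T x‖ ^ 2 ≤ c * ‖x‖ ^ 2 := by
      rw [← real_inner_self_eq_norm_sq, e1]
      calc ⟪x, Matrix.toEuclideanCLM (𝕜 := ℝ) S x⟫_ℝ ≤ c * (‖x‖ * ‖x‖) := h x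
        _ = c * ‖x‖ ^ 2 := by ring
    calc ‖T x‖ = Real.sqrt (‖T x‖ ^ 2) := (Real.sqrt_sq (norm_nonneg _)).symm
      _ ≤ Real.sqrt (c * ‖x‖ ^ 2) := Real.sqrt_le_sqrt key
      _ = Real.sqrt c * ‖x‖ := by
          rw [Real.sqrt_mul hc, Real.sqrt_sq (norm_nonneg _)]
  calc ‖S‖ = ‖s * s‖ := by rw [hmul]
    _ ≤ ‖s‖ * ‖s‖ := Matrix.l2_opNorm_mul s s
    _ ≤ Real.sqrt c * Real.sqrt c := by
        have := norm_nonneg s; gcongr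
    _ = c := Real.mul_self_sqrt hc

lemma clm_continuous_of_entries {f : ℝ → Matrix (Fin n) (Fin n) ℝ}
    (hf : ∀ i j, Continuous fun t => f t i j) :
    Continuous fun t => Matrix.toEuclideanCLM (𝕜 := ℝ) (f t) := by
  have key : ∀ t, Matrix.toEuclideanCLM (𝕜 := ℝ) (f t)
      = ∑ i, ∑ j, f t i j • Matrix.toEuclideanCLM (𝕜 := ℝ) (Matrix.single i j 1) := by
    intro t
    conv_lhs => rw [Matrix.matrix_eq_sum_single (f t)]
    rw [map_sum]
    refine Finset.sum_congr rfl fun i _ => ?_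
    rw [map_sum]
    refine Finset.sum_congr rfl fun j _ => ?_
    rw [show Matrix.single i j (f t i j) = f t i j • Matrix.single i j 1 by
      rw [Matrix.smul_single, smul_eq_mul, mul_one], _root_.map_smul]
  simp only [key]
  exact continuous_finset_sum _ fun i _ => continuous_finset_sum _ fun j _ =>
    ((hf i j).smul continuous_const)

lemma transpose_norm_le (A : Matrix (Fin n) (Fin n) ℝ) : ‖Aᵀ‖ = ‖A‖ := by
  rw [← Matrix.conjTranspose_eq_transpose_of_trivial, Matrix.l2_opNorm_conjTranspose]

lemma norm_sub_le'' {p q : ℕ} (A B : Matrix (Fin p) (Fin q) ℝ) : ‖A - B‖ ≤ ‖A‖ + ‖B‖ :=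
  norm_sub_le _ _

lemma transpose_norm_le' {p q : ℕ} (A : Matrix (Fin p) (Fin q) ℝ) : ‖Aᵀ‖ = ‖A‖ := by
  rw [← Matrix.conjTranspose_eq_transpose_of_trivial, Matrix.l2_opNorm_conjTranspose]

end RicAux

set_option maxHeartbeats 2000000 in
theorem stmt8 (T M : ℝ) (hT : 0 < T) (hM : 0 < M) :
    ∃ C : ℝ, ∀ (n m : ℕ)
      (At Qt : ℝ → Matrix (Fin n) (Fin n) ℝ) (Rt : ℝ → Matrix (Fin m) (Fin m) ℝ)
      (Bt : Matrix (Fin n) (Fin m) ℝ) (Gt : Matrix (Fin n) (Fin n) ℝ)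
      (Pi Pi' : ℝ → Matrix (Fin n) (Fin n) ℝ),
      (∀ i j, ContinuousOn (fun t => At t i j) (Icc 0 T)) →
      (∀ i j, ContinuousOn (fun t => Qt t i j) (Icc 0 T)) →
      (∀ i j, ContinuousOn (fun t => Rt t i j) (Icc 0 T)) →
      (∀ t ∈ Icc 0 T, (Qt t).PosSemidef) →
      (∀ t ∈ Icc 0 T, (Rt t).PosDef) →
      (∀ t ∈ Icc 0 T, sNorm (At t) ≤ M) →
      (∀ t ∈ Icc 0 T, sNorm (Qt t) ≤ M) →
      (∀ t ∈ Icc 0 T, sNorm ((Rt t)⁻¹) ≤ M) →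
      sNorm Bt ≤ M → Gt.PosSemidef → sNorm Gt ≤ M →
      (∀ i j, ∀ t ∈ Icc 0 T, HasDerivAt (fun s => Pi s i j) (Pi' t i j) t) →
      (∀ i j, ContinuousOn (fun t => Pi' t i j) (Icc 0 T)) →
      (∀ t ∈ Icc 0 T, (Pi t).PosSemidef) →
      Pi T = Gt →
      (∀ t ∈ Icc 0 T, Pi' t + Pi t * At t + (At t)ᵀ * Pi t + Qt t
          - Pi t * Bt * (Rt t)⁻¹ * Btᵀ * Pi t = 0) →
      (∀ t ∈ Icc 0 T, sNorm (Pi t) ≤ C) ∧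
      (∀ s ∈ Icc 0 T, ∀ t ∈ Icc 0 T, sNorm (Pi t - Pi s) ≤ C * |t - s|) := by
  classical
  set C₀ : ℝ := M + Real.exp (2*M*T) * (M + 1/2) with hC0def
  have hexppos : (0:ℝ) < Real.exp (2*M*T) := Real.exp_pos _
  have hC0pos : 0 < C₀ := by rw [hC0def]; nlinarith
  set C₁ : ℝ := C₀*M*M*M*C₀ + C₀*M + M*C₀ + M with hC1def
  have hC1pos : 0 < C₁ := by
    rw [hC1def]
    nlinarith [mul_pos (mul_pos (mul_pos (mul_pos hC0pos hM) hM) hM) hC0pos,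
      mul_pos hC0pos hM, mul_pos hM hC0pos]
  refine ⟨C₀ + C₁, ?_⟩
  intro n m At Qt Rt Bt Gt Pi Pi' hAcont hQcont hRcont hQpsd hRpd hAb hQb hRb hBb hGpsd hGb
    hPider hPi'cont hPipsd hPiT hRic
  simp only [sNorm_eq] at hAb hQb hRb hBb hGb ⊢
  have hTmem : T ∈ Icc (0:ℝ) T := ⟨le_of_lt hT, le_refl T⟩
  -- clamp to [0, T]
  set cl : ℝ → ℝ := fun s => max 0 (min s T) with hcldef
  have hclmem : ∀ s, cl s ∈ Icc (0:ℝ) T := fun s =>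
    ⟨le_max_left _ _, max_le (le_of_lt hT) (min_le_right _ _)⟩
  have hclid : ∀ t ∈ Icc (0:ℝ) T, cl t = t := fun t ht => by
    simp only [hcldef]
    rw [min_eq_left ht.2, max_eq_right ht.1]
  have hclcont : Continuous cl := continuous_const.max (continuous_id.min continuous_const)
  -- continuous envelope of the norm of Pi
  set Ncl : ℝ → ℝ := fun s => ‖Pi (cl s)‖ with hNcldef
  have hNclcont : Continuous Ncl := by
    have h1 : ∀ i j, Continuous fun s => Pi (cl s) i j := fun i j =>
      continuous_iff_continuousAt.2 fun s =>
        ((hPider i j (cl s) (hclmem s)).continuousAt).comp hclcont.continuousAt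
    exact (RicAux.clm_continuous_of_entries h1).norm
  have hNcl0 : ∀ s, 0 ≤ Ncl s := fun s => norm_nonneg _
  have hNcleq : ∀ t ∈ Icc (0:ℝ) T, Ncl t = ‖Pi t‖ := fun t ht => by
    simp only [hNcldef]; rw [hclid t ht]
  -- scalar helper functions
  set φ : ℝ → ℝ := fun s => 2*M*Ncl s + M with hφdef
  have hφcont : Continuous φ := (continuous_const.mul hNclcont).add continuous_const
  have hφ0 : ∀ s, 0 ≤ φ s := fun s => by
    have := hNcl0 s; simp only [hφdef]; nlinarith
  set ψ : ℝ → ℝ := fun t => ∫ s in t..T, φ s with hψdef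
  have hψeq : ∀ t, ψ t = (∫ s in (0:ℝ)..T, φ s) - ∫ s in (0:ℝ)..t, φ s := fun t =>
    (intervalIntegral.integral_interval_sub_left (hφcont.intervalIntegrable _ _)
      (hφcont.intervalIntegrable _ _)).symm
  have hψder : ∀ t, HasDerivAt ψ (-(φ t)) t := by
    intro t
    have h := ((hφcont.integral_hasStrictDerivAt 0 t).hasDerivAt).const_sub
      (∫ s in (0:ℝ)..T, φ s)
    rwa [show (fun u => (∫ s in (0:ℝ)..T, φ s) - ∫ s in (0:ℝ)..u, φ s) = ψ from
      (funext fun u => (hψeq u).symm)] at h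
  have hψ0 : ∀ t ∈ Icc (0:ℝ) T, 0 ≤ ψ t := fun t ht =>
    intervalIntegral.integral_nonneg ht.2 (fun u _ => hφ0 u)
  have hψT : ψ T = 0 := intervalIntegral.integral_same
  -- derivative of the quadratic/bilinear form
  have hqder : ∀ (x y : EuclideanSpace ℝ (Fin n)), ∀ t ∈ Icc (0:ℝ) T,
      HasDerivAt (fun u => ⟪y, Matrix.toEuclideanCLM (𝕜 := ℝ) (Pi u) x⟫_ℝ)
        (⟪y, Matrix.toEuclideanCLM (𝕜 := ℝ) (Pi' t) x⟫_ℝ) t := by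
    intro x y t ht
    simp only [RicAux.inner_clm]
    exact HasDerivAt.fun_sum fun i _ =>
      ((HasDerivAt.fun_sum fun j _ => ((hPider i j t ht).mul_const (x j))).const_mul (y i))
  -- rearranged Riccati equation
  have hP'eq : ∀ t ∈ Icc (0:ℝ) T, Pi' t =
      Pi t * Bt * (Rt t)⁻¹ * Btᵀ * Pi t - Qt t - (At t)ᵀ * Pi t - Pi t * At t := by
    intro t ht
    have h := hRic t ht
    rw [sub_eq_zero] at h
    exact eq_sub_of_add_eq (eq_sub_of_add_eq (eq_sub_of_add_eq h))
  -- the quadratic term is positive semidefinite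
  have hPPpsd : ∀ t ∈ Icc (0:ℝ) T, (Pi t * Bt * (Rt t)⁻¹ * Btᵀ * Pi t).PosSemidef := by
    intro t ht
    have h1 : ((Rt t)⁻¹).PosSemidef := ((hRpd t ht).inv).posSemidef
    have h2 : (Bt * (Rt t)⁻¹ * Btᴴ).PosSemidef := h1.mul_mul_conjTranspose_same Bt
    have h3 := h2.conjTranspose_mul_mul_same (Pi t)
    have e : (Pi t)ᴴ * (Bt * (Rt t)⁻¹ * Btᴴ) * Pi t
        = Pi t * Bt * (Rt t)⁻¹ * Btᵀ * Pi t := by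
      rw [(hPipsd t ht).1, Matrix.conjTranspose_eq_transpose_of_trivial]
      simp only [Matrix.mul_assoc]
    rwa [e] at h3
  -- lower bound on the quadratic form of Pi'
  have hqlow : ∀ t ∈ Icc (0:ℝ) T, ∀ x : EuclideanSpace ℝ (Fin n),
      -((2*M*‖Pi t‖ + M) * (‖x‖*‖x‖)) ≤ ⟪x, Matrix.toEuclideanCLM (𝕜 := ℝ) (Pi' t) x⟫_ℝ := by
    intro t ht x
    rw [hP'eq t ht]
    simp only [_root_.map_sub, ContinuousLinearMap.sub_apply, inner_sub_right]
    have h0 := RicAux.psd_inner_nonneg (hPPpsd t ht) x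
    have h1 : |⟪x, Matrix.toEuclideanCLM (𝕜 := ℝ) (Qt t) x⟫_ℝ| ≤ M * (‖x‖*‖x‖) :=
      le_trans (RicAux.abs_inner_clm_le _ _ _)
        (mul_le_mul_of_nonneg_right (hQb t ht) (by positivity))
    have h2 : |⟪x, Matrix.toEuclideanCLM (𝕜 := ℝ) ((At t)ᵀ * Pi t) x⟫_ℝ|
        ≤ M * ‖Pi t‖ * (‖x‖*‖x‖) := by
      refine le_trans (RicAux.abs_inner_clm_le _ _ _)
        (mul_le_mul_of_nonneg_right ?_ (by positivity))
      calc ‖(At t)ᵀ * Pi t‖ ≤ ‖(At t)ᵀ‖ * ‖Pi t‖ := Matrix.l2_opNorm_mul _ _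
        _ ≤ M * ‖Pi t‖ := by
            rw [RicAux.transpose_norm_le]
            exact mul_le_mul_of_nonneg_right (hAb t ht) (norm_nonneg _)
    have h3 : |⟪x, Matrix.toEuclideanCLM (𝕜 := ℝ) (Pi t * At t) x⟫_ℝ|
        ≤ M * ‖Pi t‖ * (‖x‖*‖x‖) := by
      refine le_trans (RicAux.abs_inner_clm_le _ _ _)
        (mul_le_mul_of_nonneg_right ?_ (by positivity))
      calc ‖Pi t * At t‖ ≤ ‖Pi t‖ * ‖At t‖ := Matrix.l2_opNorm_mul _ _
        _ ≤ M * ‖Pi t‖ := by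
            rw [mul_comm]
            exact mul_le_mul_of_nonneg_right (hAb t ht) (norm_nonneg _)
    have h1' := abs_le.1 h1
    have h2' := abs_le.1 h2
    have h3' := abs_le.1 h3
    linarith [h1'.2, h2'.2, h3'.2, h0]
  -- the key Gronwall-type bound for the quadratic form of Pi
  have claim1 : ∀ t ∈ Icc (0:ℝ) T, ∀ x : EuclideanSpace ℝ (Fin n),
      ⟪x, Matrix.toEuclideanCLM (𝕜 := ℝ) (Pi t) x⟫_ℝ ≤ (M + ψ t) * (‖x‖*‖x‖) := by
    intro t ht x
    set φx : ℝ → ℝ := fun s => φ s * (‖x‖*‖x‖) with hφxdef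
    have hφxcont : Continuous φx := hφcont.mul continuous_const
    set G : ℝ → ℝ := fun u =>
      ⟪x, Matrix.toEuclideanCLM (𝕜 := ℝ) (Pi u) x⟫_ℝ + ∫ s in (0:ℝ)..u, φx s with hGdef
    have hGder : ∀ u ∈ Icc (0:ℝ) T, HasDerivAt G
        (⟪x, Matrix.toEuclideanCLM (𝕜 := ℝ) (Pi' u) x⟫_ℝ + φx u) u := fun u hu =>
      (hqder x x u hu).add ((hφxcont.integral_hasStrictDerivAt 0 u).hasDerivAt)
    have hGmono : MonotoneOn G (Icc (0:ℝ) T) := by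
      apply monotoneOn_of_deriv_nonneg (convex_Icc 0 T)
      · exact fun u hu => ((hGder u hu).continuousAt).continuousWithinAt
      · intro u hu
        rw [interior_Icc] at hu
        exact ((hGder u (Ioo_subset_Icc_self hu)).differentiableAt).differentiableWithinAt
      · intro u hu
        rw [interior_Icc] at hu
        have hu' := Ioo_subset_Icc_self hu
        rw [(hGder u hu').deriv]
        have hlow := hqlow u hu' x
        have hNe := hNcleq u hu'
        simp only [hφxdef, hφdef]
        rw [hNe]
        nlinarith [hlow]
    have hmono := hGmono ht hTmem ht.2
    simp only [hGdef] at hmono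
    have hsub : (∫ s in (0:ℝ)..T, φx s) - ∫ s in (0:ℝ)..t, φx s = ∫ s in t..T, φx s :=
      intervalIntegral.integral_interval_sub_left (hφxcont.intervalIntegrable _ _)
        (hφxcont.intervalIntegrable _ _)
    have hx2 : (∫ s in t..T, φx s) = ψ t * (‖x‖*‖x‖) := by
      simp only [hφxdef, hψdef]
      exact intervalIntegral.integral_mul_const _ _
    have hGT : ⟪x, Matrix.toEuclideanCLM (𝕜 := ℝ) (Pi T) x⟫_ℝ ≤ M * (‖x‖*‖x‖) := by
      rw [hPiT]
      exact le_trans (le_abs_self _) (le_trans (RicAux.abs_inner_clm_le _ _ _)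
        (mul_le_mul_of_nonneg_right hGb (by positivity)))
    have : ⟪x, Matrix.toEuclideanCLM (𝕜 := ℝ) (Pi t) x⟫_ℝ
        ≤ ⟪x, Matrix.toEuclideanCLM (𝕜 := ℝ) (Pi T) x⟫_ℝ + ∫ s in t..T, φx s := by
      linarith [hmono, hsub]
    rw [hx2] at this
    nlinarith [this, hGT]
  -- norm bound through PSD structure
  have hNle : ∀ t ∈ Icc (0:ℝ) T, ‖Pi t‖ ≤ M + ψ t := fun t ht =>
    RicAux.psd_norm_le (hPipsd t ht) (add_nonneg hM.le (hψ0 t ht)) (claim1 t ht)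
  -- Gronwall for ψ
  have hexpd : ∀ t : ℝ, HasDerivAt (fun u => Real.exp (2*M*u)) (2*M*Real.exp (2*M*t)) t := by
    intro t
    have h := ((hasDerivAt_id t).const_mul (2*M)).exp
    simpa [mul_comm] using h
  set H : ℝ → ℝ := fun t => Real.exp (2*M*t) * (ψ t + (M + 1/2)) with hHdef
  have hHder : ∀ t, HasDerivAt H
      (2*M*Real.exp (2*M*t) * (ψ t + (M+1/2)) + Real.exp (2*M*t) * (-(φ t))) t :=
    fun t => (hexpd t).mul ((hψder t).add_const (M+1/2))
  have hHmono : MonotoneOn H (Icc (0:ℝ) T) := by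
    apply monotoneOn_of_deriv_nonneg (convex_Icc 0 T)
    · exact fun u _ => ((hHder u).continuousAt).continuousWithinAt
    · exact fun u _ => ((hHder u).differentiableAt).differentiableWithinAt
    · intro u hu
      rw [interior_Icc] at hu
      have hu' := Ioo_subset_Icc_self hu
      rw [(hHder u).deriv]
      have h1 : φ u ≤ 2*M*(ψ u + (M+1/2)) := by
        have hb := hNle u hu'
        have hNe := hNcleq u hu'
        simp only [hφdef]
        rw [hNe]
        nlinarith [hb]
      nlinarith [Real.exp_pos (2*M*u), mul_le_mul_of_nonneg_left h1 (Real.exp_pos (2*M*u)).le]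
  have hψb : ∀ t ∈ Icc (0:ℝ) T, ψ t ≤ Real.exp (2*M*T) * (M + 1/2) := by
    intro t ht
    have hmono := hHmono ht hTmem ht.2
    simp only [hHdef, hψT] at hmono
    have hone : (1:ℝ) ≤ Real.exp (2*M*t) := Real.one_le_exp (by nlinarith [ht.1])
    have hψ0' := hψ0 t ht
    nlinarith [hmono, hone, hψ0']
  have hfinal1 : ∀ t ∈ Icc (0:ℝ) T, ‖Pi t‖ ≤ C₀ := by
    intro t ht
    have := hNle t ht
    have := hψb t ht
    rw [hC0def]
    linarith
  -- Lipschitz bound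
  have hPi'b : ∀ t ∈ Icc (0:ℝ) T, ‖Pi' t‖ ≤ C₁ := by
    intro t ht
    rw [hP'eq t ht]
    have hBt' : ‖Btᵀ‖ ≤ M := by rw [RicAux.transpose_norm_le']; exact hBb
    have hPb := hfinal1 t ht
    have t1 : ‖Pi t * Bt * (Rt t)⁻¹ * Btᵀ * Pi t‖ ≤ C₀*M*M*M*C₀ := by
      calc ‖Pi t * Bt * (Rt t)⁻¹ * Btᵀ * Pi t‖
          ≤ ‖Pi t * Bt * (Rt t)⁻¹ * Btᵀ‖ * ‖Pi t‖ := Matrix.l2_opNorm_mul _ _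
        _ ≤ (‖Pi t * Bt * (Rt t)⁻¹‖ * ‖Btᵀ‖) * ‖Pi t‖ :=
            mul_le_mul_of_nonneg_right (Matrix.l2_opNorm_mul _ _) (norm_nonneg _)
        _ ≤ ((‖Pi t * Bt‖ * ‖(Rt t)⁻¹‖) * ‖Btᵀ‖) * ‖Pi t‖ :=
            mul_le_mul_of_nonneg_right (mul_le_mul_of_nonneg_right
              (Matrix.l2_opNorm_mul _ _) (norm_nonneg _)) (norm_nonneg _)
        _ ≤ (((‖Pi t‖ * ‖Bt‖) * ‖(Rt t)⁻¹‖) * ‖Btᵀ‖) * ‖Pi t‖ :=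
            mul_le_mul_of_nonneg_right (mul_le_mul_of_nonneg_right
              (mul_le_mul_of_nonneg_right (Matrix.l2_opNorm_mul _ _) (norm_nonneg _))
              (norm_nonneg _)) (norm_nonneg _)
        _ ≤ C₀*M*M*M*C₀ := by
            have n1 := norm_nonneg (Pi t)
            have n2 := norm_nonneg Bt
            have n3 := norm_nonneg ((Rt t)⁻¹)
            have n4 := norm_nonneg Btᵀ
            have L1 : ‖Pi t‖ * ‖Bt‖ ≤ C₀ * M := mul_le_mul hPb hBb n2 hC0pos.le
            have L2 : ‖Pi t‖ * ‖Bt‖ * ‖(Rt t)⁻¹‖ ≤ C₀ * M * M :=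
              mul_le_mul L1 (hRb t ht) n3 (mul_nonneg hC0pos.le hM.le)
            have L3 : ‖Pi t‖ * ‖Bt‖ * ‖(Rt t)⁻¹‖ * ‖Btᵀ‖ ≤ C₀ * M * M * M :=
              mul_le_mul L2 hBt' n4 (mul_nonneg (mul_nonneg hC0pos.le hM.le) hM.le)
            exact mul_le_mul L3 hPb n1
              (mul_nonneg (mul_nonneg (mul_nonneg hC0pos.le hM.le) hM.le) hM.le)
    have t2 : ‖Qt t‖ ≤ M := hQb t ht
    have t3 : ‖(At t)ᵀ * Pi t‖ ≤ M * C₀ := by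
      calc ‖(At t)ᵀ * Pi t‖ ≤ ‖(At t)ᵀ‖ * ‖Pi t‖ := Matrix.l2_opNorm_mul _ _
        _ ≤ M * C₀ := by
            rw [RicAux.transpose_norm_le]
            have := norm_nonneg (Pi t)
            nlinarith [hAb t ht, hPb, hC0pos]
    have t4 : ‖Pi t * At t‖ ≤ C₀ * M := by
      calc ‖Pi t * At t‖ ≤ ‖Pi t‖ * ‖At t‖ := Matrix.l2_opNorm_mul _ _
        _ ≤ C₀ * M := by
            have := norm_nonneg (At t)
            nlinarith [hAb t ht, hPb, hC0pos]
    have tri : ‖Pi t * Bt * (Rt t)⁻¹ * Btᵀ * Pi t - Qt t - (At t)ᵀ * Pi t - Pi t * At t‖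
        ≤ ‖Pi t * Bt * (Rt t)⁻¹ * Btᵀ * Pi t‖ + ‖Qt t‖ + ‖(At t)ᵀ * Pi t‖ + ‖Pi t * At t‖ := by
      calc ‖Pi t * Bt * (Rt t)⁻¹ * Btᵀ * Pi t - Qt t - (At t)ᵀ * Pi t - Pi t * At t‖
          ≤ ‖Pi t * Bt * (Rt t)⁻¹ * Btᵀ * Pi t - Qt t - (At t)ᵀ * Pi t‖ + ‖Pi t * At t‖ :=
            RicAux.norm_sub_le'' _ _
        _ ≤ (‖Pi t * Bt * (Rt t)⁻¹ * Btᵀ * Pi t - Qt t‖ + ‖(At t)ᵀ * Pi t‖) + ‖Pi t * At t‖ := by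
            have := RicAux.norm_sub_le'' (Pi t * Bt * (Rt t)⁻¹ * Btᵀ * Pi t - Qt t) ((At t)ᵀ * Pi t)
            linarith
        _ ≤ ((‖Pi t * Bt * (Rt t)⁻¹ * Btᵀ * Pi t‖ + ‖Qt t‖) + ‖(At t)ᵀ * Pi t‖) + ‖Pi t * At t‖ := by
            have := RicAux.norm_sub_le'' (Pi t * Bt * (Rt t)⁻¹ * Btᵀ * Pi t) (Qt t)
            linarith
        _ = _ := by ring
    rw [hC1def]
    refine le_trans tri (le_trans (add_le_add (add_le_add (add_le_add t1 t2) t3) t4)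
      (le_of_eq (by ring)))
  have hLip : ∀ s ∈ Icc (0:ℝ) T, ∀ t ∈ Icc (0:ℝ) T, ‖Pi t - Pi s‖ ≤ C₁ * |t - s| := by
    intro s hs t ht
    have key : ∀ x y : EuclideanSpace ℝ (Fin n),
        ⟪Matrix.toEuclideanCLM (𝕜 := ℝ) (Pi t - Pi s) x, y⟫_ℝ
          ≤ (C₁ * |t - s|) * (‖x‖ * ‖y‖) := by
      intro x y
      have hder : ∀ u ∈ Icc (0:ℝ) T, HasDerivWithinAt
          (fun u => ⟪y, Matrix.toEuclideanCLM (𝕜 := ℝ) (Pi u) x⟫_ℝ)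
          (⟪y, Matrix.toEuclideanCLM (𝕜 := ℝ) (Pi' u) x⟫_ℝ) (Icc (0:ℝ) T) u := fun u hu =>
        (hqder x y u hu).hasDerivWithinAt
      have hbd : ∀ u ∈ Icc (0:ℝ) T,
          ‖⟪y, Matrix.toEuclideanCLM (𝕜 := ℝ) (Pi' u) x⟫_ℝ‖ ≤ C₁ * (‖y‖ * ‖x‖) := by
        intro u hu
        rw [Real.norm_eq_abs]
        exact le_trans (RicAux.abs_inner_clm_le _ _ _)
          (mul_le_mul_of_nonneg_right (hPi'b u hu) (by positivity))
      have hmvt := Convex.norm_image_sub_le_of_norm_hasDerivWithin_le hder hbd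
        (convex_Icc 0 T) hs ht
      rw [Real.norm_eq_abs, Real.norm_eq_abs] at hmvt
      have hdiff : ⟪y, Matrix.toEuclideanCLM (𝕜 := ℝ) (Pi t) x⟫_ℝ
          - ⟪y, Matrix.toEuclideanCLM (𝕜 := ℝ) (Pi s) x⟫_ℝ
          = ⟪y, Matrix.toEuclideanCLM (𝕜 := ℝ) (Pi t - Pi s) x⟫_ℝ := by
        rw [map_sub]
        simp [inner_sub_right]
      calc ⟪Matrix.toEuclideanCLM (𝕜 := ℝ) (Pi t - Pi s) x, y⟫_ℝ
          = ⟪y, Matrix.toEuclideanCLM (𝕜 := ℝ) (Pi t - Pi s) x⟫_ℝ := real_inner_comm _ _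
        _ ≤ |⟪y, Matrix.toEuclideanCLM (𝕜 := ℝ) (Pi t - Pi s) x⟫_ℝ| := le_abs_self _
        _ ≤ C₁ * (‖y‖ * ‖x‖) * |t - s| := by rw [← hdiff]; exact hmvt
        _ = (C₁ * |t - s|) * (‖x‖ * ‖y‖) := by ring
    exact RicAux.opnorm_le_of_inner_le _
      (mul_nonneg hC1pos.le (abs_nonneg _)) key
  constructor
  · intro t ht
    have := hfinal1 t ht
    linarith
  · intro s hs t ht
    have := hLip s hs t ht
    have : C₁ * |t - s| ≤ (C₀ + C₁) * |t - s| :=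
      mul_le_mul_of_nonneg_right (by linarith) (abs_nonneg _)
    linarith [hLip s hs t ht]
end
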